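/- In the two-agent, two-good economy with X₁ = (-∞,0] × [0,∞), X₂ = [0,∞) × (-∞,0], endowments e₁ = (-1/2, 1), e₂ = (1, -1/2), and utilities uᵢ(x¹,x²) = -(|x¹|+|x²|) if |x¹|+|x²| ≤ 3/2 and uᵢ = -3/2 otherwise, the price p̄ = (-1/√2, -1/√2) with allocation x̄₁ = (0, 1/2), x̄₂ = (1/2, 0) is a Walrasian equilibrium. -/

import Mathlib

/-!
Both agents face the same budget line: against the price `p̄ = -(1/√2) (1, 1)`, a bundle `y` is
affordable for agent `i` exactly when `y¹ + y² ≥ eᵢ¹ + eᵢ² = 1/2`. Since `|y¹| + |y²| ≥ y¹ + y²`,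
every affordable bundle has utility at most `-1/2`, which is the utility of `x̄ᵢ`.
-/

open RealInnerProductSpace

noncomputable def u13 : EuclideanSpace ℝ (Fin 2) → ℝ := fun x =>
  if |x 0| + |x 1| ≤ 3 / 2 then -(|x 0| + |x 1|) else -(3 / 2)

lemma u13_of_le {x : EuclideanSpace ℝ (Fin 2)} (h : |x 0| + |x 1| ≤ 3 / 2) :
    u13 x = -(|x 0| + |x 1|) :=
  if_pos h

lemma u13_le_neg_of_le {x : EuclideanSpace ℝ (Fin 2)} {a : ℝ} (ha : a ≤ 3 / 2)
    (h : a ≤ |x 0| + |x 1|) : u13 x ≤ -a := by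
  unfold u13
  split_ifs <;> linarith

lemma inner_const_left {n : ℕ} (c : ℝ) (y : EuclideanSpace ℝ (Fin n)) :
    ⟪WithLp.toLp 2 (fun _ => c), y⟫ = c * ∑ i, y i := by
  simp [PiLp.inner_apply, Finset.mul_sum, mul_comm]

lemma inner_const_le_inner_const_iff {n : ℕ} {c : ℝ} (hc : c < 0)
    (y e : EuclideanSpace ℝ (Fin n)) :
    ⟪WithLp.toLp 2 (fun _ => c), y⟫ ≤ ⟪WithLp.toLp 2 (fun _ => c), e⟫ ↔ ∑ i, e i ≤ ∑ i, y i := by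
  rw [inner_const_left, inner_const_left, mul_le_mul_left_of_neg hc]

lemma u13_le_neg_of_inner_const_le {c a : ℝ} (hc : c < 0) (ha : a ≤ 3 / 2)
    {y e : EuclideanSpace ℝ (Fin 2)} (he : a ≤ e 0 + e 1)
    (hy : ⟪WithLp.toLp 2 (fun _ => c), y⟫ ≤ ⟪WithLp.toLp 2 (fun _ => c), e⟫) :
    u13 y ≤ -a := by
  rw [inner_const_le_inner_const_iff hc, Fin.sum_univ_two, Fin.sum_univ_two] at hy
  exact u13_le_neg_of_le ha (by linarith [le_abs_self (y 0), le_abs_self (y 1)])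

/-- In the economy of Example 4.1, the price `p̄ = (-1/√2, -1/√2)` with allocation
`x̄₁ = (0, 1/2)`, `x̄₂ = (1/2, 0)` is a Walrasian equilibrium. -/
theorem stmt_13
    (X₁ : Set (EuclideanSpace ℝ (Fin 2))) (hX₁ : X₁ = {x | x 0 ≤ 0 ∧ 0 ≤ x 1})
    (X₂ : Set (EuclideanSpace ℝ (Fin 2))) (hX₂ : X₂ = {x | 0 ≤ x 0 ∧ x 1 ≤ 0})
    (e₁ e₂ : EuclideanSpace ℝ (Fin 2))
    (he₁ : e₁ = WithLp.toLp 2 (fun i => if i = 0 then -(1 / 2 : ℝ) else 1))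
    (he₂ : e₂ = WithLp.toLp 2 (fun i => if i = 0 then (1 : ℝ) else -(1 / 2)))
    (pbar : EuclideanSpace ℝ (Fin 2)) (hpbar : pbar = WithLp.toLp 2 (fun _ => -(1 / Real.sqrt 2)))
    (x₁ x₂ : EuclideanSpace ℝ (Fin 2))
    (hx₁ : x₁ = WithLp.toLp 2 (fun i => if i = 0 then (0 : ℝ) else 1 / 2))
    (hx₂ : x₂ = WithLp.toLp 2 (fun i => if i = 0 then (1 / 2 : ℝ) else 0)) :
    pbar ≠ 0 ∧
    (x₁ ∈ X₁ ∧ ⟪pbar, x₁⟫ ≤ ⟪pbar, e₁⟫) ∧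
    (x₂ ∈ X₂ ∧ ⟪pbar, x₂⟫ ≤ ⟪pbar, e₂⟫) ∧
    (∀ y ∈ X₁, ⟪pbar, y⟫ ≤ ⟪pbar, e₁⟫ → u13 y ≤ u13 x₁) ∧
    (∀ y ∈ X₂, ⟪pbar, y⟫ ≤ ⟪pbar, e₂⟫ → u13 y ≤ u13 x₂) ∧
    x₁ + x₂ = e₁ + e₂ := by
  subst hX₁ hX₂ he₁ he₂ hpbar hx₁ hx₂
  have hc : -(1 / Real.sqrt 2) < 0 := by simp [Real.sqrt_pos]
  have hux₁ : u13 (WithLp.toLp 2 (fun i => if i = 0 then (0 : ℝ) else 1 / 2)) = -(1 / 2) := by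
    rw [u13_of_le] <;> norm_num
  have hux₂ : u13 (WithLp.toLp 2 (fun i => if i = 0 then (1 / 2 : ℝ) else 0)) = -(1 / 2) := by
    rw [u13_of_le] <;> norm_num
  refine ⟨fun h => hc.ne (congrArg (· 0) h), ⟨by norm_num, ?_⟩, ⟨by norm_num, ?_⟩, ?_, ?_, ?_⟩
  · rw [inner_const_le_inner_const_iff hc]; norm_num
  · rw [inner_const_le_inner_const_iff hc]; norm_num
  · intro y _ hy
    exact hux₁ ▸ u13_le_neg_of_inner_const_le hc (by norm_num) (by norm_num) hy
  · intro y _ hy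
    exact hux₂ ▸ u13_le_neg_of_inner_const_le hc (by norm_num) (by norm_num) hy
  · ext i
    fin_cases i <;> norm_num
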